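/- The Zariski topology on Bir(P^n) is T1: every singleton {f} ⊆ Bir(P^n) is closed. Consequently, for any two morphisms φ, ψ: T → Bir(P^n) from a k-variety T, the set {t ∈ T : φ_t = ψ_t} is closed in T. -/

import Mathlib

open MvPolynomial

/-- The rational function field `k(z_1,…,z_n)`, realized as the fraction field of the
polynomial ring in `n` variables over `k`. -/
abbrev RatFunField (k : Type) [Field k] (n : ℕ) : Type :=
  FractionRing (MvPolynomial (Fin n) k)

/-- The Cremona group `Bir(ℙⁿ)`, realized as the group of `k`-algebra automorphisms of
the rational function field `k(z_1,…,z_n)`. -/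
abbrev Cremona (k : Type) [Field k] (n : ℕ) : Type :=
  RatFunField k n ≃ₐ[k] RatFunField k n

variable (k : Type) [Field k]

/-- The coordinate function `z_{j+1}` of `k(z_1,…,z_n)`. -/
noncomputable def zCoord (n : ℕ) (j : Fin n) : RatFunField k n :=
  algebraMap (MvPolynomial (Fin n) k) (RatFunField k n) (X j)

/-- Dehomogenization: `g(x_0,…,x_n) ↦ g(1, z_1, …, z_n)`. -/
noncomputable def dehom (n : ℕ) : MvPolynomial (Fin (n + 1)) k →ₐ[k] RatFunField k n :=
  aeval (Fin.cons 1 (zCoord k n))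

/-- `g = (g_0,…,g_n)` is a representation of the Cremona transformation `f` by homogeneous
polynomials of degree `d`: the `g_i` are homogeneous of degree `d`, `g_0 ≠ 0`, and
`f(z_j) = g_j(1,z_1,…,z_n)/g_0(1,z_1,…,z_n)` for all `j`. -/
def Represents (n : ℕ) (f : Cremona k n) (d : ℕ)
    (g : Fin (n + 1) → MvPolynomial (Fin (n + 1)) k) : Prop :=
  (∀ i, (g i).IsHomogeneous d) ∧ g 0 ≠ 0 ∧
    ∀ j : Fin n, f (zCoord k n j) * dehom k n (g 0) = dehom k n (g j.succ)

/-- The (algebraic) degree of a Cremona transformation: the least `d ≥ 1` such that `f`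
admits a representation by homogeneous polynomials of degree `d` (without common factor,
which is automatic at the minimal degree). -/
noncomputable def cdeg (n : ℕ) (f : Cremona k n) : ℕ :=
  sInf {d | 1 ≤ d ∧ ∃ g, Represents k n f d g}

/-- An affine `k`-variety: the maximal spectrum (= set of `k`-points) of a finitely
generated `k`-algebra `A`. -/
structure AffSource (k : Type) [Field k] : Type 1 where
  A : Type
  [cr : CommRing A]
  [alg : Algebra k A]
  [ft : Algebra.FiniteType k A]

attribute [instance] AffSource.cr AffSource.alg AffSource.ft

/-- The points (with residue field `k`) of an affine `k`-variety, i.e. the `k`-algebra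
homomorphisms `A → k`; by the Nullstellensatz these correspond to the maximal ideals. -/
abbrev AffSource.Pts (S : AffSource k) : Type := S.A →ₐ[k] k

/-- The Zariski topology on the points of an affine variety, induced from the Zariski
topology of the prime spectrum via `t ↦ ker t`. -/
noncomputable instance AffSource.ptsTopology (S : AffSource k) : TopologicalSpace S.Pts :=
  TopologicalSpace.induced
    (fun t : S.Pts =>
      (⟨RingHom.ker (t : S.A →+* k), RingHom.ker_isPrime _⟩ : PrimeSpectrum S.A))
    inferInstance

/-- `φ` is given by the polynomial family `F = (F_0,…,F_n)`, homogeneous of common degree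
`ℓ` in `x_0,…,x_n` with coefficients in `A`, on the basic open subset `D(a)`: for every
point `t` with `a(t) ≠ 0`, the evaluated polynomials `F_i(t,·)` are not all zero and
`φ_t(z_j)·F_0(t,1,z_1,…,z_n) = F_j(t,1,z_1,…,z_n)` for all `j`. -/
def IsFamilyOn (n : ℕ) (S : AffSource k) (φ : S.Pts → Cremona k n) (a : S.A)
    (ℓ : ℕ) (F : Fin (n + 1) → MvPolynomial (Fin (n + 1)) S.A) : Prop :=
  (∀ i, (F i).IsHomogeneous ℓ) ∧
    ∀ t : S.Pts, t a ≠ 0 →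
      (∃ i, MvPolynomial.map (t : S.A →+* k) (F i) ≠ 0) ∧
        ∀ j : Fin n,
          φ t (zCoord k n j) * dehom k n (MvPolynomial.map (t : S.A →+* k) (F 0)) =
            dehom k n (MvPolynomial.map (t : S.A →+* k) (F j.succ))

/-- A morphism `T → Bir(ℙⁿ)` from an affine `k`-variety `T`: a map which, locally on a
cover of `T` by basic open subsets, is given by a polynomial family of Cremona
transformations. -/
def IsMorphism (n : ℕ) (S : AffSource k) (φ : S.Pts → Cremona k n) : Prop :=
  ∀ t : S.Pts, ∃ a : S.A, t a ≠ 0 ∧ ∃ ℓ F, IsFamilyOn k n S φ a ℓ F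

/-- The Zariski topology on the Cremona group: the finest topology making every morphism
from a `k`-variety to `Bir(ℙⁿ)` continuous.  (A subset is closed if and only if its
preimage under every such morphism is closed.) -/
noncomputable instance cremonaTopology (n : ℕ) : TopologicalSpace (Cremona k n) :=
  ⨆ (S : AffSource k) (φ : { φ : S.Pts → Cremona k n // IsMorphism k n S φ }),
    TopologicalSpace.coinduced φ.1 inferInstance

/-! A Cremona transformation is determined by any homogeneous tuple `(g_0 : ⋯ : g_n)`
satisfying `f(z_j) · g_0(1,z) = g_j(1,z)`, and dehomogenization is injective on forms of a
fixed degree. So if `φ` and `ψ` are given near a point by polynomial families `F` and `G`, then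
`φ_t = ψ_t` exactly when the forms `F_{j+1} G_0 - G_{j+1} F_0` vanish at `t`, i.e. when all
their coefficients vanish at `t`: a closed condition. Clearing denominators and homogenizing
shows that every Cremona transformation has such a tuple, so constant maps are morphisms, and
`{f}` is closed because its preimage under a morphism `φ` is the coincidence set of `φ` and the
constant map `f`. -/

namespace Finsupp

theorem degree_cons {n : ℕ} (a : ℕ) (m : Fin n →₀ ℕ) :
    (cons a m).degree = a + m.degree := by
  simp [degree_eq_sum, Fin.sum_univ_succ]

theorem injOn_tail_setOf_degree_eq {n : ℕ} (D : ℕ) :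
    Set.InjOn (tail : (Fin (n + 1) →₀ ℕ) → Fin n →₀ ℕ) {m | m.degree = D} := by
  intro m hm m' hm' h
  have h0 : m 0 + m.tail.degree = m' 0 + m'.tail.degree := by
    rw [← degree_cons, ← degree_cons, cons_tail, cons_tail, hm, hm']
  rw [h, Nat.add_right_cancel_iff] at h0
  rw [← cons_tail m, ← cons_tail m', h, h0]

end Finsupp

namespace MvPolynomial

variable {R : Type*} [CommSemiring R] {n D : ℕ}

variable (R n) in
noncomputable def dehomogenize : MvPolynomial (Fin (n + 1)) R →ₐ[R] MvPolynomial (Fin n) R :=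
  aeval (Fin.cons 1 X)

theorem dehomogenize_monomial (m : Fin (n + 1) →₀ ℕ) (c : R) :
    dehomogenize R n (monomial m c) = monomial m.tail c := by
  rw [dehomogenize, aeval_monomial, monomial_eq, Finsupp.prod_pow, Finsupp.prod_pow,
    Fin.prod_univ_succ]
  simp [Finsupp.tail_apply, algebraMap_eq]

theorem dehomogenize_eq_mapDomain (p : MvPolynomial (Fin (n + 1)) R) :
    dehomogenize R n p = AddMonoidAlgebra.mapDomain Finsupp.tail p := by
  induction p using MvPolynomial.induction_on' with
  | monomial m c =>
    rw [dehomogenize_monomial]; exact AddMonoidAlgebra.mapDomain_single.symm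
  | add p q hp hq => rw [map_add, hp, hq, AddMonoidAlgebra.mapDomain_add]

theorem IsHomogeneous.coeff_tail_dehomogenize {p : MvPolynomial (Fin (n + 1)) R}
    (hp : p.IsHomogeneous D) {m : Fin (n + 1) →₀ ℕ} (hm : m.degree = D) :
    coeff m.tail (dehomogenize R n p) = coeff m p := by
  rw [dehomogenize_eq_mapDomain]
  refine Finsupp.mapDomain_apply' _ _ (fun d hd => ?_) (Finsupp.injOn_tail_setOf_degree_eq D) hm
  rw [Set.mem_ofPred_eq, Finsupp.degree_eq_weight_one]
  exact hp (mem_support_iff.mp hd)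

theorem IsHomogeneous.eq_zero_of_dehomogenize_eq_zero {p : MvPolynomial (Fin (n + 1)) R}
    (hp : p.IsHomogeneous D) (h : dehomogenize R n p = 0) : p = 0 := by
  ext m
  by_cases hm : m.degree = D
  · rw [← hp.coeff_tail_dehomogenize hm, h, coeff_zero, coeff_zero]
  · exact hp.coeff_eq_zero hm

theorem exists_isHomogeneous_dehomogenize_eq {p : MvPolynomial (Fin n) R}
    (hp : p.totalDegree ≤ D) :
    ∃ h : MvPolynomial (Fin (n + 1)) R, h.IsHomogeneous D ∧ dehomogenize R n h = p := by
  refine ⟨∑ m ∈ p.support, monomial (Finsupp.cons (D - m.degree) m) (coeff m p),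
    IsHomogeneous.sum _ _ _ fun m hm => isHomogeneous_monomial _ ?_, ?_⟩
  · have : m.degree ≤ D := (le_totalDegree hm).trans hp
    rw [Finsupp.degree_cons]
    omega
  · simp only [map_sum, dehomogenize_monomial, Finsupp.tail_cons]
    exact p.as_sum.symm

theorem exists_isHomogeneous_dehomogenize_eq_of_finite {ι : Type*} [Finite ι]
    (p : ι → MvPolynomial (Fin n) R) :
    ∃ (D : ℕ) (h : ι → MvPolynomial (Fin (n + 1)) R),
      ∀ i, (h i).IsHomogeneous D ∧ dehomogenize R n (h i) = p i := by
  cases nonempty_fintype ι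
  choose h hh using fun i => exists_isHomogeneous_dehomogenize_eq
    (Finset.le_sup (f := fun i => (p i).totalDegree) (Finset.mem_univ i))
  exact ⟨_, h, hh⟩

end MvPolynomial

open MvPolynomial

variable {k} {n : ℕ}

theorem dehom_eq_algebraMap_dehomogenize (p : MvPolynomial (Fin (n + 1)) k) :
    dehom k n p = algebraMap (MvPolynomial (Fin n) k) (RatFunField k n) (dehomogenize k n p) := by
  suffices dehom k n = (IsScalarTower.toAlgHom k _ (RatFunField k n)).comp (dehomogenize k n) by
    rw [this]; rfl
  refine MvPolynomial.algHom_ext fun i => ?_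
  induction i using Fin.cases <;> simp [dehom, dehomogenize, zCoord]

theorem MvPolynomial.IsHomogeneous.eq_zero_of_dehom_eq_zero {D : ℕ}
    {p : MvPolynomial (Fin (n + 1)) k} (hp : p.IsHomogeneous D) (h : dehom k n p = 0) : p = 0 :=
  hp.eq_zero_of_dehomogenize_eq_zero <| IsFractionRing.injective _ (RatFunField k n) <| by
    rw [← dehom_eq_algebraMap_dehomogenize, h, map_zero]

theorem Cremona.ext_zCoord {f g : Cremona k n}
    (h : ∀ j, f (zCoord k n j) = g (zCoord k n j)) : f = g :=
  AlgEquiv.coe_toAlgHom_injective <| IsLocalization.algHom_ext (nonZeroDivisors _) <|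
    MvPolynomial.algHom_ext h

theorem exists_represents (f : Cremona k n) : ∃ d g, Represents k n f d g := by
  obtain ⟨b, hb⟩ := IsLocalization.exist_integer_multiples_of_finite
    (nonZeroDivisors (MvPolynomial (Fin n) k)) fun j => f (zCoord k n j)
  choose p hp using hb
  obtain ⟨d, g, hg⟩ := exists_isHomogeneous_dehomogenize_eq_of_finite (Fin.cons (b : _) p)
  have hg0 : dehom k n (g 0) = algebraMap _ _ (b : MvPolynomial (Fin n) k) := by
    rw [dehom_eq_algebraMap_dehomogenize, (hg 0).2, Fin.cons_zero]
  refine ⟨d, g, fun i => (hg i).1, fun h0 => ?_, fun j => ?_⟩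
  · rw [h0, map_zero, eq_comm, IsFractionRing.to_map_eq_zero_iff] at hg0
    exact nonZeroDivisors.coe_ne_zero b hg0
  · rw [hg0, dehom_eq_algebraMap_dehomogenize, (hg j.succ).2, Fin.cons_succ, hp j,
      Algebra.smul_def, mul_comm]

theorem represents_of_exists_ne_zero {f : Cremona k n} {d : ℕ}
    {g : Fin (n + 1) → MvPolynomial (Fin (n + 1)) k} (hg : ∀ i, (g i).IsHomogeneous d)
    (hne : ∃ i, g i ≠ 0)
    (heq : ∀ j : Fin n, f (zCoord k n j) * dehom k n (g 0) = dehom k n (g j.succ)) :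
    Represents k n f d g := by
  refine ⟨hg, fun h0 => ?_, heq⟩
  obtain ⟨i, hi⟩ := hne
  induction i using Fin.cases with
  | zero => exact hi h0
  | succ j =>
    exact hi <| (hg j.succ).eq_zero_of_dehom_eq_zero <| by rw [← heq j, h0, map_zero, mul_zero]

theorem Represents.eq_iff {f f' : Cremona k n} {d d' : ℕ}
    {g g' : Fin (n + 1) → MvPolynomial (Fin (n + 1)) k}
    (hf : Represents k n f d g) (hf' : Represents k n f' d' g') :
    f = f' ↔ ∀ j : Fin n, g j.succ * g' 0 - g' j.succ * g 0 = 0 := by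
  obtain ⟨hg, hg0, heq⟩ := hf
  obtain ⟨hg', hg0', heq'⟩ := hf'
  have hne : dehom k n (g 0) * dehom k n (g' 0) ≠ 0 :=
    mul_ne_zero (mt (hg 0).eq_zero_of_dehom_eq_zero hg0)
      (mt (hg' 0).eq_zero_of_dehom_eq_zero hg0')
  have key : ∀ j, dehom k n (g j.succ * g' 0 - g' j.succ * g 0) =
      (f (zCoord k n j) - f' (zCoord k n j)) * (dehom k n (g 0) * dehom k n (g' 0)) := by
    intro j
    rw [map_sub, map_mul, map_mul, ← heq j, ← heq' j]
    ring
  constructor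
  · rintro rfl j
    refine (((hg j.succ).mul (hg' 0)).sub ?_).eq_zero_of_dehom_eq_zero ?_
    · exact add_comm d' d ▸ (hg' j.succ).mul (hg 0)
    · rw [key, sub_self, zero_mul]
  · intro h
    refine Cremona.ext_zCoord fun j => sub_eq_zero.mp ?_
    rw [← mul_eq_zero_iff_right hne, ← key, h j, map_zero]

namespace AffSource

variable {S : AffSource k}

theorem isOpen_setOf_ne_zero (c : S.A) : IsOpen {t : S.Pts | t c ≠ 0} := by
  have : {t : S.Pts | t c ≠ 0} =
      (fun t : S.Pts =>
        (⟨RingHom.ker (t : S.A →+* k), RingHom.ker_isPrime _⟩ : PrimeSpectrum S.A)) ⁻¹'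
        (PrimeSpectrum.zeroLocus {c})ᶜ := by
    ext t
    simp [PrimeSpectrum.mem_zeroLocus, RingHom.mem_ker]
  rw [this]
  exact isOpen_induced (PrimeSpectrum.isClosed_zeroLocus _).isOpen_compl

end AffSource

section Morphism

variable {S : AffSource k} {φ ψ : S.Pts → Cremona k n}

theorem IsFamilyOn.represents {a : S.A} {ℓ : ℕ}
    {F : Fin (n + 1) → MvPolynomial (Fin (n + 1)) S.A} (hF : IsFamilyOn k n S φ a ℓ F)
    {t : S.Pts} (ht : t a ≠ 0) :
    Represents k n (φ t) ℓ fun i => (F i).map (t : S.A →+* k) :=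
  represents_of_exists_ne_zero (fun i => (hF.1 i).map _) (hF.2 t ht).1 (hF.2 t ht).2

theorem IsFamilyOn.eq_iff {a b : S.A} {ℓ ℓ' : ℕ}
    {F G : Fin (n + 1) → MvPolynomial (Fin (n + 1)) S.A}
    (hF : IsFamilyOn k n S φ a ℓ F) (hG : IsFamilyOn k n S ψ b ℓ' G) {t : S.Pts}
    (ha : t a ≠ 0) (hb : t b ≠ 0) :
    φ t = ψ t ↔ ∀ (j : Fin n) m, t (coeff m (F j.succ * G 0 - G j.succ * F 0)) = 0 := by
  rw [(hF.represents ha).eq_iff (hG.represents hb)]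
  refine forall_congr' fun j => ?_
  rw [MvPolynomial.eq_zero_iff]
  simp only [← map_mul, ← map_sub, coeff_map]
  rfl

theorem isClosed_setOf_eq (hφ : IsMorphism k n S φ) (hψ : IsMorphism k n S ψ) :
    IsClosed {t | φ t = ψ t} := by
  refine isOpen_compl_iff.mp <| isOpen_iff_forall_mem_open.mpr fun t₀ ht₀ => ?_
  obtain ⟨a, ha, ℓ, F, hF⟩ := hφ t₀
  obtain ⟨b, hb, ℓ', G, hG⟩ := hψ t₀
  have hU : IsOpen ({t : S.Pts | t a ≠ 0} ∩ {t | t b ≠ 0} ∩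
      ⋃ (j : Fin n) (m : Fin (n + 1) →₀ ℕ),
        {t | t (coeff m (F j.succ * G 0 - G j.succ * F 0)) ≠ 0}) :=
    ((AffSource.isOpen_setOf_ne_zero a).inter (AffSource.isOpen_setOf_ne_zero b)).inter <|
      isOpen_iUnion fun _ => isOpen_iUnion fun _ => AffSource.isOpen_setOf_ne_zero _
  refine ⟨_, ?_, hU, ⟨ha, hb⟩, ?_⟩
  · rintro t ⟨⟨hta, htb⟩, ht⟩
    simp only [Set.mem_iUnion] at ht
    obtain ⟨j, m, hjm⟩ := ht
    exact fun h => hjm ((hF.eq_iff hG hta htb).mp h j m)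
  · by_contra h
    simp only [Set.mem_iUnion, not_exists, Set.mem_ofPred_eq, not_not] at h
    exact ht₀ ((hF.eq_iff hG ha hb).mpr h)

theorem isMorphism_const (f : Cremona k n) : IsMorphism k n S fun _ => f := by
  obtain ⟨d, g, hg, hg0, heq⟩ := exists_represents f
  have hmap : ∀ (t : S.Pts) i, ((g i).map (algebraMap k S.A)).map (t : S.A →+* k) = g i := by
    intro t i
    rw [MvPolynomial.map_map, AlgHom.comp_algebraMap, Algebra.algebraMap_self, map_id]
  refine fun _ => ⟨1, by simp, d, fun i => (g i).map (algebraMap k S.A),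
    fun i => (hg i).map _, fun t _ => ⟨⟨0, by rwa [hmap]⟩, fun j => ?_⟩⟩
  simpa only [hmap] using heq j

end Morphism

theorem isClosed_cremona_iff {s : Set (Cremona k n)} :
    IsClosed s ↔ ∀ (S : AffSource k) (φ : S.Pts → Cremona k n), IsMorphism k n S φ →
      IsClosed (φ ⁻¹' s) := by
  simp only [isClosed_iSup_iff, isClosed_coinduced, Subtype.forall]

theorem cremona_t1Space_general (k : Type) [Field k] (n : ℕ) :
    T1Space (Cremona k n) ∧
    ∀ (S : AffSource k) (φ ψ : S.Pts → Cremona k n),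
      IsMorphism k n S φ → IsMorphism k n S ψ →
      IsClosed {t : S.Pts | φ t = ψ t} :=
  ⟨⟨fun f => isClosed_cremona_iff.mpr fun _ _ hφ =>
      isClosed_setOf_eq hφ (isMorphism_const f)⟩,
    fun _ _ _ => isClosed_setOf_eq⟩

/-- The Zariski topology of `Bir(ℙⁿ)` is T1 (singletons are closed); consequently, for
any two morphisms `φ, ψ : T → Bir(ℙⁿ)` the coincidence set `{t | φ_t = ψ_t}` is closed
in `T`. -/
theorem cremona_t1Space (k : Type) [Field k] [IsAlgClosed k] (n : ℕ) (hn : 1 ≤ n) :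
    T1Space (Cremona k n) ∧
    ∀ (S : AffSource k) (φ ψ : S.Pts → Cremona k n),
      IsMorphism k n S φ → IsMorphism k n S ψ →
      IsClosed {t : S.Pts | φ t = ψ t} :=
  cremona_t1Space_general k n
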